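/- arXiv:2011.07600 — 2 statements merged into one kernel-verified Lean document; each statement's English description precedes it below -/
import Mathlib

section
/- At any optimal solution of the problem maximizing ∑ₖ τₖ·log₂(1 + yₖ/τₖ) subject to ∑ₖ τₖ ≤ 1 and τₖ ≥ 0 (with all yₖ > 0), the time constraint holds with equality: ∑ₖ τₖ = 1. -/
/-!
Giving a user more time strictly increases its throughput: `t ↦ t log(1 + y/t)` is strictly
increasing on `[0, ∞)`, by Bernoulli's inequality `(1 + y/b)^(b/a) > 1 + y/a` for `0 < a < b`.
So if `∑ τₖ < 1`, handing the idle time to one user yields a feasible strictly better schedule.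
-/

open Real Finset

lemma strictMonoOn_mul_logb_one_add_div {b y : ℝ} (hb : 1 < b) (hy : 0 < y) :
    StrictMonoOn (fun t => t * logb b (1 + y / t)) (Set.Ici 0) := by
  intro s hs t _ hst
  have ht : 0 < t := lt_of_le_of_lt hs hst
  have hyt : 0 < y / t := div_pos hy ht
  have hlog_t : 0 < logb b (1 + y / t) := logb_pos hb (by linarith)
  rcases eq_or_lt_of_le (Set.mem_Ici.mp hs) with rfl | hs
  · simpa using mul_pos ht hlog_t
  have hbern : 1 + y / s < (1 + y / t) ^ (t / s) := by
    have := one_add_mul_self_lt_rpow_one_add (by linarith) hyt.ne' ((one_lt_div hs).mpr hst)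
    rwa [div_mul_div_cancel₀' ht.ne'] at this
  have hlog_s : logb b (1 + y / s) < t / s * logb b (1 + y / t) := by
    rw [← logb_rpow_eq_mul_logb_of_pos (by linarith)]
    exact logb_lt_logb hb (by positivity) hbern
  calc s * logb b (1 + y / s) < s * (t / s * logb b (1 + y / t)) :=
        mul_lt_mul_of_pos_left hlog_s hs
    _ = t * logb b (1 + y / t) := by field_simp

lemma sum_lt_sum_add_single {ι : Type*} [Fintype ι] [DecidableEq ι] {g : ι → ℝ → ℝ}
    {x : ι → ℝ} {i : ι} {δ : ℝ} (hi : g i (x i) < g i (x i + δ)) :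
    ∑ k, g k (x k) < ∑ k, g k ((x + Pi.single i δ : ι → ℝ) k) := by
  refine sum_lt_sum (fun k _ => ?_) ⟨i, mem_univ i, by simpa using hi⟩
  rcases eq_or_ne k i with rfl | hk
  · simpa using hi.le
  · simp [Pi.single_eq_of_ne hk]

/-- At any optimal solution of maximizing ∑ₖ τₖ·log₂(1 + yₖ/τₖ) subject to
∑ₖ τₖ ≤ 1 and τₖ ≥ 0 (all yₖ > 0), the time constraint is tight: ∑ₖ τₖ = 1.
(Note: in Lean, y/0 = 0, so the term at τₖ = 0 automatically equals 0.) -/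
theorem stmt_4 (K : ℕ) (hK : 1 ≤ K) (y : Fin K → ℝ) (hy : ∀ k, 0 < y k)
    (τ : Fin K → ℝ) (hτ : ∀ k, 0 ≤ τ k) (hsum : ∑ k, τ k ≤ 1)
    (hopt : ∀ τ' : Fin K → ℝ, (∀ k, 0 ≤ τ' k) → (∑ k, τ' k ≤ 1) →
      ∑ k, τ' k * Real.logb 2 (1 + y k / τ' k) ≤
        ∑ k, τ k * Real.logb 2 (1 + y k / τ k)) :
    ∑ k, τ k = 1 := by
  by_contra hne
  have hε : 0 < 1 - ∑ k, τ k := sub_pos.mpr (lt_of_le_of_ne hsum hne)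
  let i : Fin K := ⟨0, hK⟩
  let τ' := τ + Pi.single i (1 - ∑ k, τ k)
  have hτ' : ∀ k, 0 ≤ τ' k := fun k =>
    add_nonneg (hτ k) ((Pi.single_nonneg (α := fun _ => ℝ)).mpr hε.le k)
  have hsum' : ∑ k, τ' k = 1 := by
    simp only [τ', Pi.add_apply, sum_add_distrib, sum_pi_single', mem_univ, if_true]
    ring
  have hbetter := sum_lt_sum_add_single (g := fun k t => t * logb 2 (1 + y k / t))
    (strictMonoOn_mul_logb_one_add_div one_lt_two (hy i) (Set.mem_Ici.mpr (hτ i))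
      (Set.mem_Ici.mpr (by linarith [hτ i])) (lt_add_of_pos_right _ hε))
  exact (hopt τ' hτ' hsum'.le).not_gt hbetter
end

section
/- For any feasible τ with 0 < ∑ₖ τₖ < 1 and scaling factor α = 1/(∑ₖ τₖ) > 1, the scaled allocation τ̄ₖ = α·τₖ is feasible (∑ₖ τ̄ₖ = 1) and achieves a strictly larger sum throughput ∑ₖ τ̄ₖ·log₂(1 + yₖ/τ̄ₖ) > ∑ₖ τₖ·log₂(1 + yₖ/τₖ), provided some τₖ > 0 and all yₖ > 0. -/
/-!
The per-user throughput t ↦ t·log(1 + y/t) is strictly increasing for t > 0: writing u = y/t,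
the inequality α·log(1 + u/α) > log(1 + u) for α > 1 is strict concavity of log at the points
1 and 1 + u with weights 1 - 1/α and 1/α, as log 1 = 0. Users with τₖ = 0 contribute 0 before
and after scaling (in Lean via 0 * _ = 0).
-/

open Real Finset

lemma log_one_add_lt_mul_log_one_add_div {u α : ℝ} (hu : 0 < u) (hα : 1 < α) :
    log (1 + u) < α * log (1 + u / α) := by
  have hα₀ : 0 < α := one_pos.trans hα
  have hconc := strictConcaveOn_log_Ioi.2 (Set.mem_Ioi.2 one_pos)
    (Set.mem_Ioi.2 (by linarith : (0 : ℝ) < 1 + u)) (by linarith : (1 : ℝ) ≠ 1 + u)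
    (sub_pos.2 (inv_lt_one_of_one_lt₀ hα)) (inv_pos.2 hα₀) (sub_add_cancel 1 α⁻¹)
  have hpoint : (1 - α⁻¹) • (1 : ℝ) + α⁻¹ • (1 + u) = 1 + u / α := by
    simp only [smul_eq_mul]; ring
  rw [hpoint, log_one, smul_zero, zero_add, smul_eq_mul] at hconc
  calc log (1 + u) = α * (α⁻¹ * log (1 + u)) := by field_simp
    _ < α * log (1 + u / α) := mul_lt_mul_of_pos_left hconc hα₀

lemma mul_logb_one_add_div_lt_rescale {b y t α : ℝ} (hb : 1 < b) (hy : 0 < y) (ht : 0 < t)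
    (hα : 1 < α) :
    t * logb b (1 + y / t) < (α * t) * logb b (1 + y / (α * t)) := by
  have hlog := log_one_add_lt_mul_log_one_add_div (div_pos hy ht) hα
  rw [div_div, mul_comm t α] at hlog
  simp only [logb, mul_div_assoc']
  gcongr ?_ / _
  · exact log_pos hb
  · calc t * log (1 + y / t) < t * (α * log (1 + y / (α * t))) :=
          mul_lt_mul_of_pos_left hlog ht
      _ = α * t * log (1 + y / (α * t)) := by ring

lemma mul_logb_one_add_div_le_rescale {b y t α : ℝ} (hb : 1 < b) (hy : 0 < y) (ht : 0 ≤ t)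
    (hα : 1 < α) :
    t * logb b (1 + y / t) ≤ (α * t) * logb b (1 + y / (α * t)) := by
  rcases ht.eq_or_lt with rfl | ht
  · simp
  · exact (mul_logb_one_add_div_lt_rescale hb hy ht hα).le

theorem stmt_5_general (K : ℕ) (y : Fin K → ℝ) (hy : ∀ k, 0 < y k)
    (τ : Fin K → ℝ) (hτ : ∀ k, 0 ≤ τ k) (hpos : ∃ k, 0 < τ k)
    (hsum : ∑ k, τ k < 1) :
    (∑ k, (1 / ∑ j, τ j) * τ k = 1) ∧
    (∑ k, τ k * Real.logb 2 (1 + y k / τ k) <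
      ∑ k, ((1 / ∑ j, τ j) * τ k) *
        Real.logb 2 (1 + y k / ((1 / ∑ j, τ j) * τ k))) := by
  obtain ⟨k₀, hk₀⟩ := hpos
  have hS : 0 < ∑ j, τ j := sum_pos' (fun k _ => hτ k) ⟨k₀, mem_univ k₀, hk₀⟩
  have hα : 1 < 1 / ∑ j, τ j := (one_lt_div hS).2 hsum
  refine ⟨by rw [← mul_sum, one_div_mul_cancel hS.ne'], ?_⟩
  exact sum_lt_sum (fun k _ => mul_logb_one_add_div_le_rescale one_lt_two (hy k) (hτ k) hα)
    ⟨k₀, mem_univ k₀, mul_logb_one_add_div_lt_rescale one_lt_two (hy k₀) hk₀ hα⟩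

/-- Scaling a feasible allocation with 0 < ∑τ < 1 by α = 1/∑τ gives a feasible
allocation with ∑ ατ = 1 and strictly larger sum throughput. -/
theorem stmt_5 (K : ℕ) (hK : 1 ≤ K) (y : Fin K → ℝ) (hy : ∀ k, 0 < y k)
    (τ : Fin K → ℝ) (hτ : ∀ k, 0 ≤ τ k) (hpos : ∃ k, 0 < τ k)
    (hsum : ∑ k, τ k < 1) :
    (∑ k, (1 / ∑ j, τ j) * τ k = 1) ∧
    (∑ k, τ k * Real.logb 2 (1 + y k / τ k) <
      ∑ k, ((1 / ∑ j, τ j) * τ k) *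
        Real.logb 2 (1 + y k / ((1 / ∑ j, τ j) * τ k))) :=
  stmt_5_general K y hy τ hτ hpos hsum
end
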